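/- Let (pₙ)_{n≥1} be a strictly increasing unbounded sequence of positive reals. Then there exists a real solution λ* of the continued fraction equation λp₁ = 1/(λp₂ - 1/(λp₃ - 1/(λp₄ - ...))) satisfying 1/√(p₁p₂) < λ* < 1/√(p₁p₂ - p₁²). -/

import Mathlib

open Filter

/-- `G_m(λ) = (λ p_m - √(λ² p_m² - 4))/2`. -/
noncomputable def cfG (p : ℕ → ℝ) (m : ℕ) (lam : ℝ) : ℝ :=
  (lam * p m - Real.sqrt ((lam * p m) ^ 2 - 4)) / 2

/-- The truncated continued fraction
`F_{n,k}(λ) = 1/(λpₙ - 1/(λpₙ₊₁ - ... - 1/(λpₙ₊ₖ - G_{n+k+1}(λ))))`. -/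
noncomputable def cfF (p : ℕ → ℝ) (lam : ℝ) : ℕ → ℕ → ℝ
  | n, 0 => 1 / (lam * p n - cfG p (n + 1) lam)
  | n, k + 1 => 1 / (lam * p n - cfF p lam (n + 1) k)
  termination_by n k => k

/-!
For `m ≥ N` with `λ pₘ ≥ 3` the maps `u ↦ 1 / (λ pₘ - u)` are `1/4`-contractions on `u ≤ 1`, so
the tails `Fₘ(λ)`, `m ≥ N`, converge, uniformly and hence continuously in `λ ≥ 1 / p₂`. The finite
head `F₂, …, F_N` is encoded by the solution `w` of a three-term recurrence started from
`(F_N, 1)`: it depends continuously on `λ` and `F_{N-k} = w k / w (k + 1)`. All `w k` are positive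
at `λ = 3 / p₁`; at `λ = 1 / p₂` they cannot all be, since that would force `λ² p₁ p₂ > 1`. The
intermediate value theorem for `minₖ w k` gives a `λ*` where all `w k ≥ 0` and one vanishes; a zero
below the top would force a negative neighbour, so `w 0, …, w (N - 1) > 0 = w N`, which says
`λ* p₁ = F₂(λ*)`. Finally the positive solution of `Fₙ (λ pₙ - Fₙ₊₁) = 1` is strictly decreasing
because `pₙ → ∞`, and both bounds come from `F₂ (λ p₂ - F₃) = 1` with `0 < F₃ < F₂ = λ p₁`.
-/

open Topology Set

section Continuant

variable {R : Type*} [CommRing R]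

/-- The solution of `w (k + 2) + w k = y (k + 1) * w (k + 1)` with `w 0 = t` and `w 1 = 1`.
Run from the top `N` of a continued fraction, with `y k = λ p_{N-k}` and `t = F_N`, it satisfies
`F_{N-k} = w k / w (k + 1)` as long as no `w k` vanishes. -/
def continuant (y : ℕ → R) (t : R) : ℕ → R
  | 0 => t
  | 1 => 1
  | k + 2 => y (k + 1) * continuant y t (k + 1) - continuant y t k

lemma continuant_add_two (y : ℕ → R) (t : R) (k : ℕ) :
    continuant y t (k + 2) = y (k + 1) * continuant y t (k + 1) - continuant y t k := rfl

lemma continuousOn_continuant [TopologicalSpace R] [IsTopologicalRing R] {X : Type*}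
    [TopologicalSpace X] {s : Set X} {y : X → ℕ → R} {t : X → R}
    (hy : ∀ k, ContinuousOn (fun x => y x k) s) (ht : ContinuousOn t s) (k : ℕ) :
    ContinuousOn (fun x => continuant (y x) (t x) k) s := by
  induction k using Nat.twoStepInduction with
  | zero => exact ht
  | one => exact continuousOn_const
  | more k h₀ h₁ => exact ((hy (k + 1)).mul h₁).sub h₀

variable [LinearOrder R] [IsStrictOrderedRing R] {y : ℕ → R} {t : R} {K : ℕ}

lemma continuant_pos_of_two_le (ht₀ : 0 < t) (ht₁ : t ≤ 1) (hy : ∀ k < K, 2 ≤ y (k + 1)) :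
    ∀ k ≤ K, 0 < continuant y t k ∧ continuant y t k ≤ continuant y t (k + 1) := by
  intro k
  induction k with
  | zero => exact fun _ => ⟨ht₀, ht₁⟩
  | succ k ih =>
    intro hk
    obtain ⟨h₀, h₁⟩ := ih (by omega)
    have h₂ := hy k (by omega)
    refine ⟨h₀.trans_le h₁, ?_⟩
    rw [continuant_add_two]
    nlinarith

/-- A zero of `w` in the middle would force a negative value just above it. -/
lemma continuant_pos_of_nonneg (ht : 0 < t) (hw : ∀ k ≤ K + 1, 0 ≤ continuant y t k) :
    ∀ k ≤ K, 0 < continuant y t k := by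
  suffices h : ∀ k, k + 1 ≤ K → 0 < continuant y t (k + 1) by
    rintro (_ | k) hk
    exacts [ht, h k hk]
  intro k
  induction k with
  | zero => exact fun _ => zero_lt_one
  | succ k ih =>
    intro hk
    have h₁ := ih (by omega)
    have h₃ := hw (k + 3) (by omega)
    refine (hw (k + 2) (by omega)).lt_of_ne fun h₂ => ?_
    rw [continuant_add_two, ← h₂, mul_zero] at h₃
    linarith

lemma one_lt_mul_of_continuant_nonneg (h₀ : 0 < continuant y t K)
    (h₁ : 0 < continuant y t (K + 1)) (h₃ : 0 ≤ continuant y t (K + 3))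
    (hy : 0 < y (K + 2)) : 1 < y (K + 1) * y (K + 2) := by
  rw [continuant_add_two, continuant_add_two] at h₃
  nlinarith [mul_pos hy h₀]

end Continuant

lemma exists_mem_Icc_forall_nonneg_exists_eq_zero {ι α : Type*}
    [ConditionallyCompleteLinearOrder α] [TopologicalSpace α] [OrderTopology α] [DenselyOrdered α]
    {s : Finset ι} (hs : s.Nonempty) {f : ι → α → ℝ} {a b : α} (hab : a ≤ b)
    (hf : ∀ i ∈ s, ContinuousOn (f i) (Icc a b)) (ha : ∃ i ∈ s, f i a ≤ 0)
    (hb : ∀ i ∈ s, 0 ≤ f i b) :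
    ∃ c ∈ Icc a b, (∀ i ∈ s, 0 ≤ f i c) ∧ ∃ i ∈ s, f i c = 0 := by
  obtain ⟨i, hi, hia⟩ := ha
  obtain ⟨c, hc, hgc⟩ := intermediate_value_Icc hab (ContinuousOn.finset_inf'_apply hs hf)
    ⟨(s.inf'_le (f · a) hi).trans hia, s.le_inf' hs (f · b) hb⟩
  obtain ⟨j, hj, hgj⟩ := s.exists_mem_eq_inf' hs (f · c)
  exact ⟨c, hc, fun k hk => hgc ▸ s.inf'_le (f · c) hk, j, hj, hgj ▸ hgc⟩

/-- `Fₙ(λ)`; a junk value when the truncations `cfF p λ n k` diverge. -/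
noncomputable def cfLim (p : ℕ → ℝ) (lam : ℝ) (n : ℕ) : ℝ :=
  limUnder atTop (cfF p lam n)

section ContinuedFraction

variable {p : ℕ → ℝ} {lam : ℝ} {n : ℕ}

lemma cfF_zero (p : ℕ → ℝ) (lam : ℝ) (n : ℕ) :
    cfF p lam n 0 = 1 / (lam * p n - cfG p (n + 1) lam) := by
  rw [cfF]

lemma cfF_succ (p : ℕ → ℝ) (lam : ℝ) (n k : ℕ) :
    cfF p lam n (k + 1) = 1 / (lam * p n - cfF p lam (n + 1) k) := by
  rw [cfF]

lemma Filter.Tendsto.cfLim_eq {L : ℝ} (h : Tendsto (cfF p lam n) atTop (𝓝 L)) :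
    cfLim p lam n = L :=
  h.limUnder_eq

lemma tendsto_cfF_of_tendsto_succ {L : ℝ} (h : Tendsto (cfF p lam (n + 1)) atTop (𝓝 L))
    (hL : lam * p n - L ≠ 0) : Tendsto (cfF p lam n) atTop (𝓝 (1 / (lam * p n - L))) := by
  rw [← tendsto_add_atTop_iff_nat 1]
  simp only [cfF_succ]
  exact tendsto_const_nhds.div (tendsto_const_nhds.sub h) hL

/-- No junk value interferes here: `λ pₙ - F_{n+1,k} = 1 / F_{n,k+1}` holds even when both
sides vanish. -/
lemma tendsto_cfF_succ_of_tendsto {L : ℝ} (h : Tendsto (cfF p lam n) atTop (𝓝 L)) (hL : L ≠ 0) :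
    Tendsto (cfF p lam (n + 1)) atTop (𝓝 (lam * p n - 1 / L)) := by
  have h' : Tendsto (fun k => lam * p n - 1 / cfF p lam n (k + 1)) atTop
      (𝓝 (lam * p n - 1 / L)) :=
    tendsto_const_nhds.sub (tendsto_const_nhds.div ((tendsto_add_atTop_iff_nat 1).2 h) hL)
  simpa only [cfF_succ, one_div_one_div, sub_sub_cancel] using h'

lemma cfLim_mul_sub_eq_one (h : Tendsto (cfF p lam n) atTop (𝓝 (cfLim p lam n)))
    (h₀ : cfLim p lam n ≠ 0) : cfLim p lam n * (lam * p n - cfLim p lam (n + 1)) = 1 := by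
  rw [(tendsto_cfF_succ_of_tendsto h h₀).cfLim_eq]
  field_simp
  ring

lemma cfG_mem_Icc {m : ℕ} (h : 2 ≤ lam * p m) : cfG p m lam ∈ Icc 0 1 := by
  have h₁ : √((lam * p m) ^ 2 - 4) ≤ lam * p m := Real.sqrt_le_iff.2 ⟨by linarith, by linarith⟩
  have h₂ : lam * p m - 2 ≤ √((lam * p m) ^ 2 - 4) :=
    (Real.le_sqrt (by linarith) (by nlinarith)).2 (by nlinarith)
  constructor <;> unfold cfG <;> linarith

lemma continuous_cfG (p : ℕ → ℝ) (m : ℕ) : Continuous (cfG p m) := by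
  unfold cfG
  fun_prop

lemma abs_one_div_sub_sub_one_div_sub_le {x u v : ℝ} (hx : 3 ≤ x) (hu : u ≤ 1) (hv : v ≤ 1) :
    |1 / (x - u) - 1 / (x - v)| ≤ |u - v| / 4 := by
  have hxu : 0 < x - u := by linarith
  have hxv : 0 < x - v := by linarith
  have h : 1 / (x - u) - 1 / (x - v) = (u - v) / ((x - u) * (x - v)) := by
    field_simp
    ring
  rw [h, abs_div, abs_of_pos (mul_pos hxu hxv)]
  exact div_le_div_of_nonneg_left (abs_nonneg _) (by norm_num) (by nlinarith)

end ContinuedFraction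

section Tail

variable {p : ℕ → ℝ} {lam : ℝ} {n M : ℕ}

lemma cfF_pos_le_half (h3 : ∀ m ≥ M, 3 ≤ lam * p m) :
    ∀ k n, M ≤ n → 0 < cfF p lam n k ∧ cfF p lam n k ≤ 1 / 2 := by
  have step : ∀ n u, M ≤ n → u ≤ 1 → 0 < 1 / (lam * p n - u) ∧ 1 / (lam * p n - u) ≤ 1 / 2 :=
    fun n u hn hu => have := h3 n hn
      ⟨one_div_pos.2 (by linarith), one_div_le_one_div_of_le (by norm_num) (by linarith)⟩
  intro k
  induction k with
  | zero =>
    intro n hn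
    rw [cfF_zero]
    exact step n _ hn (cfG_mem_Icc (by linarith [h3 (n + 1) (by omega)])).2
  | succ k ih =>
    intro n hn
    rw [cfF_succ]
    exact step n _ hn (by linarith [(ih (n + 1) (by omega)).2])

lemma abs_cfF_succ_sub_le (h3 : ∀ m ≥ M, 3 ≤ lam * p m) :
    ∀ k n, M ≤ n → |cfF p lam n (k + 1) - cfF p lam n k| ≤ (1 / 4) ^ k := by
  intro k
  induction k with
  | zero =>
    intro n hn
    rw [cfF_succ p lam n 0, cfF_zero p lam n]
    obtain ⟨hu₀, hu₁⟩ := cfF_pos_le_half h3 0 (n + 1) (by omega)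
    obtain ⟨hg₀, hg₁⟩ := cfG_mem_Icc (p := p) (lam := lam) (m := n + 1)
      (by linarith [h3 (n + 1) (by omega)])
    have hd : |cfF p lam (n + 1) 0 - cfG p (n + 1) lam| ≤ 1 := abs_le.2 ⟨by linarith, by linarith⟩
    have := abs_one_div_sub_sub_one_div_sub_le (u := cfF p lam (n + 1) 0) (h3 n hn)
      (by linarith) hg₁
    linarith
  | succ k ih =>
    intro n hn
    rw [cfF_succ p lam n (k + 1), cfF_succ p lam n k, pow_succ]
    have := abs_one_div_sub_sub_one_div_sub_le (h3 n hn)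
      (by linarith [(cfF_pos_le_half h3 (k + 1) (n + 1) (by omega)).2])
      (by linarith [(cfF_pos_le_half h3 k (n + 1) (by omega)).2])
    linarith [ih (n + 1) (by omega)]

lemma dist_cfF_succ_le (h3 : ∀ m ≥ M, 3 ≤ lam * p m) (hn : M ≤ n) (k : ℕ) :
    dist (cfF p lam n k) (cfF p lam n (k + 1)) ≤ 1 * (1 / 4) ^ k := by
  rw [dist_comm, Real.dist_eq, one_mul]
  exact abs_cfF_succ_sub_le h3 k n hn

lemma tendsto_cfF_cfLim (h3 : ∀ m ≥ M, 3 ≤ lam * p m) (hn : M ≤ n) :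
    Tendsto (cfF p lam n) atTop (𝓝 (cfLim p lam n)) :=
  (cauchySeq_of_le_geometric _ _ (by norm_num) (dist_cfF_succ_le h3 hn)).tendsto_limUnder

lemma cfLim_pos_le_half (h3 : ∀ m ≥ M, 3 ≤ lam * p m) (hn : M ≤ n) :
    0 < cfLim p lam n ∧ cfLim p lam n ≤ 1 / 2 := by
  have hle : ∀ m ≥ M, cfLim p lam m ≤ 1 / 2 := fun m hm =>
    le_of_tendsto' (tendsto_cfF_cfLim h3 hm) fun k => (cfF_pos_le_half h3 k m hm).2
  have hd : 2 ≤ lam * p n - cfLim p lam (n + 1) := by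
    linarith [h3 n hn, hle (n + 1) (by omega)]
  rw [(tendsto_cfF_of_tendsto_succ (tendsto_cfF_cfLim h3 (by omega)) (by linarith)).cfLim_eq]
  exact ⟨one_div_pos.2 (by linarith), one_div_le_one_div_of_le (by norm_num) hd⟩

variable {s : Set ℝ}

lemma continuousOn_cfF (hs : ∀ lam ∈ s, ∀ m ≥ M, 3 ≤ lam * p m) (k : ℕ) :
    ∀ n, M ≤ n → ContinuousOn (fun lam => cfF p lam n k) s := by
  induction k with
  | zero =>
    intro n hn
    simp only [cfF_zero]
    refine continuousOn_const.div
      ((continuous_id.mul continuous_const).sub (continuous_cfG p (n + 1))).continuousOn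
      fun lam hlam => ?_
    linarith [hs lam hlam n hn, (cfG_mem_Icc (p := p) (lam := lam) (m := n + 1) (by
      linarith [hs lam hlam (n + 1) (by omega)])).2]
  | succ k ih =>
    intro n hn
    simp only [cfF_succ]
    refine continuousOn_const.div ((continuousOn_id.mul continuousOn_const).sub
      (ih (n + 1) (by omega))) fun lam hlam => ?_
    linarith [hs lam hlam n hn, (cfF_pos_le_half (hs lam hlam) k (n + 1) (by omega)).2]

lemma continuousOn_cfLim (hs : ∀ lam ∈ s, ∀ m ≥ M, 3 ≤ lam * p m) (hn : M ≤ n) :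
    ContinuousOn (fun lam => cfLim p lam n) s := by
  refine TendstoUniformlyOn.continuousOn (F := fun k lam => cfF p lam n k) (p := atTop) ?_
    (Eventually.of_forall (f := atTop) fun k => continuousOn_cfF hs k n hn).frequently
  rw [Metric.tendstoUniformlyOn_iff]
  intro ε hε
  have h := ((tendsto_pow_atTop_nhds_zero_of_lt_one (r := (1 / 4 : ℝ)) (by norm_num)
    (by norm_num)).const_mul 1).div_const (1 - 1 / 4)
  rw [mul_zero, zero_div] at h
  filter_upwards [h.eventually (gt_mem_nhds hε)] with k hk lam hlam
  rw [dist_comm]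
  exact (dist_le_of_le_geometric_of_tendsto _ _ (by norm_num) (dist_cfF_succ_le (hs lam hlam) hn)
    (tendsto_cfF_cfLim (hs lam hlam) hn) k).trans_lt hk

end Tail

noncomputable def cfContinuant (p : ℕ → ℝ) (lam : ℝ) (N : ℕ) : ℕ → ℝ :=
  continuant (fun k => lam * p (N - k)) (cfLim p lam N)

section FiniteHead

variable {p : ℕ → ℝ} {lam : ℝ} {N : ℕ}

lemma cfContinuant_add_two (k : ℕ) :
    cfContinuant p lam N (k + 2) =
      lam * p (N - (k + 1)) * cfContinuant p lam N (k + 1) - cfContinuant p lam N k :=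
  rfl

lemma tendsto_cfF_cfContinuant_div (h3 : ∀ m ≥ N, 3 ≤ lam * p m)
    (hw : ∀ k < N, 0 < cfContinuant p lam N k) :
    ∀ j n, n + j = N → 2 ≤ n →
      Tendsto (cfF p lam n) atTop
        (𝓝 (cfContinuant p lam N j / cfContinuant p lam N (j + 1))) := by
  intro j
  induction j with
  | zero =>
    intro n hn _
    obtain rfl : n = N := by omega
    simpa [cfContinuant, continuant] using tendsto_cfF_cfLim h3 le_rfl
  | succ j ih =>
    intro n hn h2
    have hw₁ := hw (j + 1) (by omega)
    have hden : lam * p n - cfContinuant p lam N j / cfContinuant p lam N (j + 1) =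
        cfContinuant p lam N (j + 2) / cfContinuant p lam N (j + 1) := by
      rw [cfContinuant_add_two, show N - (j + 1) = n by omega]
      field_simp
    have h := tendsto_cfF_of_tendsto_succ (ih (n + 1) (by omega) (by omega))
      (hden ▸ (div_pos (hw (j + 2) (by omega)) hw₁).ne')
    rwa [hden, one_div_div] at h

lemma cfLim_of_cfContinuant_eq_zero (h3 : ∀ m ≥ N, 3 ≤ lam * p m) (hN : 2 ≤ N)
    (hw : ∀ k < N, 0 < cfContinuant p lam N k) (hroot : cfContinuant p lam N N = 0) :
    (∀ n ≥ 2, Tendsto (cfF p lam n) atTop (𝓝 (cfLim p lam n)) ∧ 0 < cfLim p lam n) ∧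
      cfLim p lam 2 = lam * p 1 := by
  have head := tendsto_cfF_cfContinuant_div h3 hw
  refine ⟨fun n hn => ?_, ?_⟩
  · rcases le_total N n with hNn | hnN
    · exact ⟨tendsto_cfF_cfLim h3 hNn, (cfLim_pos_le_half h3 hNn).1⟩
    · have h := head (N - n) n (by omega) hn
      have hpos := div_pos (hw (N - n) (by omega)) (hw (N - n + 1) (by omega))
      have e := h.cfLim_eq
      rw [← e] at h hpos
      exact ⟨h, hpos⟩
  · obtain ⟨K, rfl⟩ : ∃ K, N = K + 2 := ⟨N - 2, by omega⟩
    rw [(head K 2 (by omega) le_rfl).cfLim_eq]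
    rw [cfContinuant_add_two, show K + 2 - (K + 1) = 1 by omega, sub_eq_zero] at hroot
    rw [← hroot, mul_div_assoc, div_self (hw (K + 1) (by omega)).ne', mul_one]

lemma cfContinuant_pos_of_forall_three_le (h3 : ∀ m ≥ 1, 3 ≤ lam * p m) (hN : 1 ≤ N) :
    ∀ k ≤ N, 0 < cfContinuant p lam N k := by
  obtain ⟨hlim₀, hlim₁⟩ := cfLim_pos_le_half (n := N) (fun m hm => h3 m (by omega)) le_rfl
  have h := continuant_pos_of_two_le (y := fun k => lam * p (N - k)) (K := N - 1) hlim₀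
    (by linarith) fun k hk => by linarith [h3 (N - (k + 1)) (by omega)]
  intro k hk
  rcases Nat.lt_or_ge k N with hkN | hkN
  · exact (h k (by omega)).1
  · obtain ⟨h₀, h₁⟩ := h (N - 1) le_rfl
    rw [show N - 1 + 1 = N by omega] at h₁
    rw [show k = N by omega]
    exact h₀.trans_le h₁

end FiniteHead

lemma exists_cfContinuant_eq_zero {p : ℕ → ℝ} {N : ℕ} {a b : ℝ} (hN : 3 ≤ N) (ha : 0 < a)
    (hab : a ≤ b) (hp : ∀ m ≥ 1, 0 < p m) (hsmall : a * p 2 * (a * p 1) ≤ 1)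
    (htail : ∀ m ≥ N, 3 ≤ a * p m) (hlarge : ∀ m ≥ 1, 3 ≤ b * p m) :
    ∃ lam ∈ Icc a b, (∀ k < N, 0 < cfContinuant p lam N k) ∧ cfContinuant p lam N N = 0 := by
  have h3 : ∀ lam ∈ Icc a b, ∀ m ≥ N, 3 ≤ lam * p m := fun lam hlam m hm =>
    (htail m hm).trans (mul_le_mul_of_nonneg_right hlam.1 (hp m (by omega)).le)
  have hlim : ∀ lam ∈ Icc a b, 0 < cfLim p lam N := fun lam hlam =>
    (cfLim_pos_le_half (h3 lam hlam) le_rfl).1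
  have hcont : ∀ k ∈ Finset.range (N + 1),
      ContinuousOn (fun lam => cfContinuant p lam N k) (Icc a b) := fun k _ =>
    continuousOn_continuant (fun _ => (continuous_id.mul continuous_const).continuousOn)
      (continuousOn_cfLim h3 le_rfl) k
  have hleft : ∃ k ∈ Finset.range (N + 1), cfContinuant p a N k ≤ 0 := by
    by_contra! hpos
    obtain ⟨K, rfl⟩ : ∃ K, N = K + 3 := ⟨N - 3, by omega⟩
    have h := one_lt_mul_of_continuant_nonneg (y := fun k => a * p (K + 3 - k))
      (hpos K (by simp)) (hpos (K + 1) (by simp)) (hpos (K + 3) (by simp)).le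
      (by simpa using mul_pos ha (hp 1 le_rfl))
    simp only [show K + 3 - (K + 1) = 2 by omega, show K + 3 - (K + 2) = 1 by omega] at h
    linarith
  have hright : ∀ k ∈ Finset.range (N + 1), 0 ≤ cfContinuant p b N k := fun k hk =>
    (cfContinuant_pos_of_forall_three_le hlarge (by omega) k (by simp at hk; omega)).le
  obtain ⟨c, hc, hnonneg, i, hi, hci⟩ := exists_mem_Icc_forall_nonneg_exists_eq_zero
    Finset.nonempty_range_add_one hab hcont hleft hright
  have hpos := continuant_pos_of_nonneg (y := fun k => c * p (N - k)) (K := N - 1) (hlim c hc)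
    fun k hk => hnonneg k (Finset.mem_range.2 (by omega))
  have hiN : i = N := by
    by_contra hne
    exact (hpos i (by simp at hi; omega)).ne' hci
  exact ⟨c, hc, fun k hk => hpos k (by omega), hiN ▸ hci⟩

/-- Otherwise `F` increases from some point on, and then `xₙ = 1 / Fₙ + Fₙ₊₁` stays bounded. -/
lemma strictAnti_of_mul_sub_eq_one {x F : ℕ → ℝ} {B : ℝ} (hx : Monotone x)
    (hx_top : Tendsto x atTop atTop) (hF : ∀ n, 0 < F n) (hrec : ∀ n, F n * (x n - F (n + 1)) = 1)
    (hB : ∀ᶠ n in atTop, F n ≤ B) : StrictAnti F := by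
  have hinv : ∀ n, x n - F (n + 1) = 1 / F n := fun n => by
    rw [eq_div_iff (hF n).ne', mul_comm, hrec]
  refine strictAnti_nat_of_succ_lt fun m => lt_of_not_ge fun hm => ?_
  have hup : ∀ n ≥ m, F n ≤ F (n + 1) := by
    refine Nat.le_induction hm fun n _ ih => ?_
    have := one_div_le_one_div_of_le (hF n) ih
    linarith [hinv n, hinv (n + 1), hx (Nat.le_succ n)]
  have hge : ∀ n ≥ m, F m ≤ F n := Nat.le_induction le_rfl fun n hn ih => ih.trans (hup n hn)
  obtain ⟨n, hxn, hBn, hmn⟩ := ((hx_top.eventually_gt_atTop (1 / F m + B)).and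
    (((tendsto_add_atTop_nat 1).eventually hB).and (eventually_ge_atTop m))).exists
  have := one_div_le_one_div_of_le (hF m) (hge n hmn)
  linarith [hinv n]

lemma one_div_sqrt_lt_of_one_lt_sq_mul {a x : ℝ} (hx : 0 < x) (h : 1 < x ^ 2 * a) :
    1 / √a < x := by
  have ha : 0 < a := pos_of_mul_pos_right (one_pos.trans h) (sq_nonneg x)
  rw [div_lt_iff₀ (Real.sqrt_pos.2 ha), ← Real.sqrt_sq hx.le, ← Real.sqrt_mul (sq_nonneg x)]
  exact (Real.lt_sqrt zero_le_one).2 (by simpa using h)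

lemma lt_one_div_sqrt_of_sq_mul_lt_one {a x : ℝ} (ha : 0 < a) (hx : 0 < x) (h : x ^ 2 * a < 1) :
    x < 1 / √a := by
  rw [lt_div_iff₀ (Real.sqrt_pos.2 ha), ← Real.sqrt_sq hx.le, ← Real.sqrt_mul (sq_nonneg x)]
  exact (Real.sqrt_lt' one_pos).2 (by simpa using h)

lemma exists_cfLim_two_eq {p : ℕ → ℝ} (hpos : ∀ n, 1 ≤ n → 0 < p n)
    (hmono : ∀ n, 1 ≤ n → p n < p (n + 1)) (hunb : Tendsto p atTop atTop) :
    ∃ lam > 0, (∀ n ≥ 2, Tendsto (cfF p lam n) atTop (𝓝 (cfLim p lam n)) ∧ 0 < cfLim p lam n) ∧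
      cfLim p lam 2 = lam * p 1 ∧ ∀ᶠ n in atTop, cfLim p lam n ≤ 1 / 2 := by
  have hp₁ := hpos 1 le_rfl
  have hp₂ := hpos 2 (by norm_num)
  have hp₁₂ := hmono 1 le_rfl
  have hp_mono : MonotoneOn p (Ici 1) := monotoneOn_nat_Ici_of_le_succ fun n hn => (hmono n hn).le
  obtain ⟨N₀, hN₀⟩ := eventually_atTop.1 (hunb.eventually_ge_atTop (3 * p 2))
  set N := max N₀ 3
  have htail : ∀ m ≥ N, 3 ≤ 1 / p 2 * p m := fun m hm => by
    rw [one_div_mul_eq_div, le_div_iff₀ hp₂]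
    linarith [hN₀ m (le_of_max_le_left hm)]
  obtain ⟨lam, hlam, hw, hroot⟩ := exists_cfContinuant_eq_zero (b := 3 / p 1) (le_max_right N₀ 3)
    (by positivity) (by rw [div_le_div_iff₀ hp₂ hp₁]; linarith) hpos
    (by field_simp; linarith) htail fun m hm => by
      rw [div_mul_eq_mul_div, le_div_iff₀ hp₁]
      nlinarith [hp_mono (mem_Ici.2 le_rfl) (mem_Ici.2 hm) hm]
  have h3 : ∀ m ≥ N, 3 ≤ lam * p m := fun m hm =>
    (htail m hm).trans (mul_le_mul_of_nonneg_right hlam.1 (hpos m (by omega)).le)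
  obtain ⟨hconv, hF₂⟩ := cfLim_of_cfContinuant_eq_zero h3 (by omega) hw hroot
  exact ⟨lam, (by positivity : 0 < 1 / p 2).trans_le hlam.1, hconv, hF₂,
    eventually_atTop.2 ⟨N, fun n hn => (cfLim_pos_le_half h3 hn).2⟩⟩

/-- Let `(pₙ)_{n≥1}` be a strictly increasing unbounded sequence of positive reals.
Then there exists a real solution `λ*` of the continued fraction equation
`λp₁ = 1/(λp₂ - 1/(λp₃ - 1/(λp₄ - ...)))` (interpreted as
`λ* p₁ = F₂(λ*) = lim_{k→∞} F_{2,k}(λ*)`) satisfying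
`1/√(p₁p₂) < λ* < 1/√(p₁p₂ - p₁²)`. -/
theorem stmt6 (p : ℕ → ℝ) (hpos : ∀ n, 1 ≤ n → 0 < p n)
    (hmono : ∀ n, 1 ≤ n → p n < p (n + 1))
    (hunb : Tendsto p atTop atTop) :
    ∃ lam : ℝ,
      1 / Real.sqrt (p 1 * p 2) < lam ∧
      lam < 1 / Real.sqrt (p 1 * p 2 - (p 1) ^ 2) ∧
      Tendsto (fun k : ℕ => cfF p lam 2 k) atTop (nhds (lam * p 1)) := by
  obtain ⟨lam, hlam, hconv, hF₂, hbdd⟩ := exists_cfLim_two_eq hpos hmono hunb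
  have hp₁ := hpos 1 le_rfl
  have hF₃ := (hconv 3 (by norm_num)).2
  have hrec := cfLim_mul_sub_eq_one (hconv 2 le_rfl).1 (hconv 2 le_rfl).2.ne'
  have hanti := strictAnti_of_mul_sub_eq_one (x := fun n => lam * p (n + 2))
    (monotone_nat_of_le_succ fun n =>
      mul_le_mul_of_nonneg_left (hmono (n + 2) (by omega)).le hlam.le)
    ((hunb.comp (tendsto_add_atTop_nat 2)).const_mul_atTop hlam)
    (fun n => (hconv (n + 2) (by omega)).2)
    (fun n => cfLim_mul_sub_eq_one (hconv (n + 2) (by omega)).1 (hconv (n + 2) (by omega)).2.ne')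
    ((tendsto_add_atTop_nat 2).eventually hbdd)
  have hF₃₂ : cfLim p lam 3 < cfLim p lam 2 := hanti zero_lt_one
  rw [hF₂] at hrec hF₃₂
  refine ⟨lam, one_div_sqrt_lt_of_one_lt_sq_mul hlam (by nlinarith),
    lt_one_div_sqrt_of_sq_mul_lt_one (by nlinarith [hmono 1 le_rfl]) hlam (by nlinarith),
    hF₂ ▸ (hconv 2 le_rfl).1⟩
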